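/- Let S be a numerical semigroup that is not symmetric, and let h ∈ S be nonzero. Then the S-ideal D(S,h) = ⋂_{γ ∈ Ap(S,h)} (γ + S) is not a principal S-ideal, i.e., there is no m ∈ ℤ with D(S,h) = m + S. -/

import Mathlib

/-!
If `D(S,h) = m + S`, comparing the largest integers outside the two sides forces `m = f + h`,
where `f` is the Frobenius number of `S`. Then `f + h ∈ D(S,h)`, i.e. `f + h - γ ∈ S` for every
`γ ∈ Ap(S,h)`. For `y ∉ S` the Apéry element `γ = y + (k+1)h` of the class of `y` then gives
`f - y = (f + h - γ) + k h ∈ S`, which is the symmetry of `S`.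
-/

namespace NumericalSemigroup

def apery (S : Set ℕ) (h : ℕ) : Set ℕ := {w | w ∈ S ∧ ¬ ∃ u ∈ S, w = u + h}

def translate (m : ℤ) (S : Set ℕ) : Set ℤ := {z | ∃ t ∈ S, z = m + t}

def dedekindIdeal (S : Set ℕ) (h : ℕ) : Set ℤ := {z | ∀ γ ∈ apery S h, z ∈ translate γ S}

/-- `f` plays the role of the Frobenius number `c - 1`, which is `-1` when `S = ℕ`. -/
def IsSymmetricAbout (S : Set ℕ) (f : ℤ) : Prop :=
  ∀ x : ℤ, (∃ n ∈ S, (n : ℤ) = x) ↔ ¬ ∃ n ∈ S, (n : ℤ) = f - x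

variable {S : Set ℕ} {f h : ℕ}

theorem mem_translate_self (h0 : 0 ∈ S) (m : ℤ) : m ∈ translate m S := ⟨0, h0, by simp⟩

theorem mul_mem (h0 : 0 ∈ S) (hadd : ∀ a ∈ S, ∀ b ∈ S, a + b ∈ S) (hh : h ∈ S) :
    ∀ k : ℕ, k * h ∈ S
  | 0 => by simpa using h0
  | k + 1 => by simpa [Nat.succ_mul] using hadd _ (mul_mem h0 hadd hh k) _ hh

theorem add_mem_apery {y : ℕ} (hy : y ∉ S) (hyh : y + h ∈ S) : y + h ∈ apery S h :=
  ⟨hyh, fun ⟨u, hu, he⟩ => hy (by rwa [Nat.add_right_cancel he.symm] at hu)⟩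

theorem exists_add_succ_mul_mem_apery {y : ℕ} (hy : y ∉ S) (hex : ∃ k, y + k * h ∈ S) :
    ∃ k, y + (k + 1) * h ∈ apery S h := by
  classical
  have hpos : Nat.find hex ≠ 0 := fun h0 => hy (by simpa [h0] using Nat.find_spec hex)
  obtain ⟨k, hk⟩ := Nat.exists_eq_succ_of_ne_zero hpos
  have hkS : y + (k + 1) * h ∈ S := by
    have := Nat.find_spec hex
    rwa [hk] at this
  have hkS' : y + k * h ∉ S := Nat.find_min hex (by omega)
  refine ⟨k, ?_⟩
  rw [Nat.succ_mul, ← add_assoc] at hkS ⊢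
  exact add_mem_apery hkS' hkS

section Frobenius

variable (hgt : ∀ n, f < n → n ∈ S)
include hgt

theorem le_of_mem_apery {γ : ℕ} (hγ : γ ∈ apery S h) : γ ≤ f + h := by
  by_contra! hlt
  exact hγ.2 ⟨γ - h, hgt _ (by omega), by omega⟩

theorem frobenius_add_mem_apery (hh0 : h ≠ 0) (hf : f ∉ S) : f + h ∈ apery S h :=
  add_mem_apery hf (hgt _ (by omega))

theorem mem_dedekindIdeal_of_lt {z : ℤ} (hz : 2 * (f : ℤ) + h < z) : z ∈ dedekindIdeal S h := by
  intro γ hγ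
  have := le_of_mem_apery hgt hγ
  exact ⟨(z - γ).toNat, hgt _ (by omega), by omega⟩

theorem eq_of_dedekindIdeal_eq_translate (h0 : 0 ∈ S) (hh0 : h ≠ 0) (hf : f ∉ S) {m : ℤ}
    (hm : dedekindIdeal S h = translate m S) : m = f + h := by
  have hfrob : m + f ∉ dedekindIdeal S h := by
    rw [hm]
    rintro ⟨t, ht, he⟩
    exact hf (by rwa [show t = f by omega] at ht)
  have hle : m ≤ f + h := by
    by_contra! hlt
    exact hfrob (mem_dedekindIdeal_of_lt hgt (by omega))
  obtain ⟨t, -, ht⟩ := (hm ▸ mem_translate_self h0 m : m ∈ dedekindIdeal S h) _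
    (frobenius_add_mem_apery hgt hh0 hf)
  push_cast at ht
  omega

theorem mem_of_add_eq_frobenius (h0 : 0 ∈ S) (hadd : ∀ a ∈ S, ∀ b ∈ S, a + b ∈ S)
    (hh : h ∈ S) (hh0 : h ≠ 0) (hD : (f + h : ℤ) ∈ dedekindIdeal S h)
    {x y : ℕ} (hxy : x + y = f) (hy : y ∉ S) : x ∈ S := by
  obtain ⟨k, hk⟩ := exists_add_succ_mul_mem_apery (h := h) hy
    ⟨f + 1, hgt _ (by nlinarith [Nat.one_le_iff_ne_zero.2 hh0])⟩
  obtain ⟨t, ht, hte⟩ := hD _ hk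
  have hx : x = t + k * h := by
    push_cast at hte
    linarith
  exact hx ▸ hadd _ ht _ (mul_mem h0 hadd hh k)

theorem isSymmetricAbout_of_mem_dedekindIdeal (h0 : 0 ∈ S)
    (hadd : ∀ a ∈ S, ∀ b ∈ S, a + b ∈ S) (hh : h ∈ S) (hh0 : h ≠ 0) (hf : f ∉ S)
    (hD : (f + h : ℤ) ∈ dedekindIdeal S h) : IsSymmetricAbout S f := by
  intro x
  constructor
  · rintro ⟨n, hn, rfl⟩ ⟨n', hn', he⟩
    exact hf (by simpa [show n + n' = f by omega] using hadd n hn n' hn')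
  · intro hx
    by_cases hxf : (f : ℤ) < x
    · exact ⟨x.toNat, hgt _ (by omega), by omega⟩
    have hx0 : 0 ≤ x := by
      by_contra! hneg
      exact hx ⟨(f - x).toNat, hgt _ (by omega), by omega⟩
    exact ⟨x.toNat, mem_of_add_eq_frobenius hgt h0 hadd hh hh0 hD
      (y := (f - x).toNat) (by omega) fun hy => hx ⟨_, hy, by omega⟩, by omega⟩

end Frobenius

theorem isSymmetricAbout_neg_one (hS : ∀ n, n ∈ S) : IsSymmetricAbout S (-1) := fun x =>
  ⟨fun ⟨n, _, hn⟩ ⟨n', _, hn'⟩ => by omega,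
   fun hx => ⟨x.toNat, hS _, by by_contra; exact hx ⟨(-1 - x).toNat, hS _, by omega⟩⟩⟩

theorem frobenius_of_isLeast_conductor {c : ℕ} (hc : IsLeast {c' : ℕ | ∀ n ≥ c', n ∈ S} c)
    (hc0 : 0 < c) : c - 1 ∉ S ∧ ∀ n, c - 1 < n → n ∈ S := by
  refine ⟨fun hS => ?_, fun n hn => hc.1 n (by omega)⟩
  have : c ≤ c - 1 := hc.2 fun n hn => by
    obtain rfl | hlt := hn.eq_or_lt
    · exact hS
    · exact hc.1 n (by omega)
  omega

end NumericalSemigroup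

open NumericalSemigroup in
theorem dedekind_ideal_not_principal_general (S : Set ℕ) (h0 : 0 ∈ S)
    (hadd : ∀ a ∈ S, ∀ b ∈ S, a + b ∈ S)
    (c : ℕ) (hc : IsLeast {c' : ℕ | ∀ n ≥ c', n ∈ S} c)
    (hnotsym : ¬ (∀ x : ℤ, (∃ n ∈ S, (n : ℤ) = x) ↔
        ¬ ∃ n ∈ S, (n : ℤ) = (c : ℤ) - 1 - x))
    (h : ℕ) (hh : h ∈ S) (hh0 : h ≠ 0) :
    ¬ ∃ m : ℤ, {z : ℤ | ∀ γ ∈ {w : ℕ | w ∈ S ∧ ¬ ∃ u ∈ S, w = u + h},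
        ∃ t ∈ S, z = (γ : ℤ) + t} = {z : ℤ | ∃ t ∈ S, z = m + t} := by
  rintro ⟨m, hm⟩
  change dedekindIdeal S h = translate m S at hm
  obtain rfl | hc0 := Nat.eq_zero_or_pos c
  · apply hnotsym
    simp only [Nat.cast_zero, zero_sub]
    exact isSymmetricAbout_neg_one fun n => hc.1 n n.zero_le
  obtain ⟨hf, hgt⟩ := frobenius_of_isLeast_conductor hc hc0
  have hmD : ((c - 1 : ℕ) + h : ℤ) ∈ dedekindIdeal S h :=
    eq_of_dedekindIdeal_eq_translate hgt h0 hh0 hf hm ▸ hm ▸ mem_translate_self h0 m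
  have hsymm := isSymmetricAbout_of_mem_dedekindIdeal hgt h0 hadd hh hh0 hf hmD
  rw [Nat.cast_sub hc0] at hsymm
  exact hnotsym hsymm

/-- If a numerical semigroup `S` is not symmetric, then for nonzero `h ∈ S`
the `S`-ideal `D(S,h) = ⋂_{γ ∈ Ap(S,h)} (γ + S)` is not principal. -/
theorem dedekind_ideal_not_principal (S : Set ℕ) (h0 : 0 ∈ S)
    (hadd : ∀ a ∈ S, ∀ b ∈ S, a + b ∈ S)
    (hfin : {n : ℕ | n ∉ S}.Finite)
    (c : ℕ) (hc : IsLeast {c' : ℕ | ∀ n ≥ c', n ∈ S} c)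
    (hnotsym : ¬ (∀ x : ℤ, (∃ n ∈ S, (n : ℤ) = x) ↔
        ¬ ∃ n ∈ S, (n : ℤ) = (c : ℤ) - 1 - x))
    (h : ℕ) (hh : h ∈ S) (hh0 : h ≠ 0) :
    ¬ ∃ m : ℤ, {z : ℤ | ∀ γ ∈ {w : ℕ | w ∈ S ∧ ¬ ∃ u ∈ S, w = u + h},
        ∃ t ∈ S, z = (γ : ℤ) + t} = {z : ℤ | ∃ t ∈ S, z = m + t} :=
  dedekind_ideal_not_principal_general S h0 hadd c hc hnotsym h hh hh0
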